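/- For every a ∈ (0,1), the function y ↦ h_a(y, 2 − a·y) is integrable on ℝ and ∫_ℝ h_a(y, 2 − a·y) dy = 0. Moreover, for all y ∈ ℝ one has the antiderivative identity a·(1+a²)·h_a(y, 2−a·y) = d/dy [ (1 − 3a² − 2a·(1−a²)·y) / (y² + (2 − a·y)²) ]. -/

import Mathlib

open MeasureTheory

/-- The kernel `h_a(y,r) := (y² − r² − (a⁻¹ − a)·y·r)/(y² + r²)²`. -/
noncomputable def hker (a y r : ℝ) : ℝ :=
  (y ^ 2 - r ^ 2 - (a⁻¹ - a) * y * r) / (y ^ 2 + r ^ 2) ^ 2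

/-!
The function `F(z) = (1 − 3a² − 2a(1−a²)z)/(z² + (2 − az)²)` is a primitive of
`a(1+a²) h_a(y, 2 − ay)`, as a direct computation shows. Since `z² + (2 − az)²` is comparable
to `1 + z²`, the kernel on the line is `O(1/(1+y²))`, hence integrable, while `F` decays like
`1/z` at both ends; so the integral is `F(+∞) − F(−∞) = 0`.
-/

open Filter Topology

-- `(1 + a²)(y² + (2 − ay)²) − (1 + y²) = 1 + 2(ay − 1)² + a²(2 − ay)²`
lemma one_add_sq_le_mul_sq_add_sq_line (a y : ℝ) :
    1 + y ^ 2 ≤ (1 + a ^ 2) * (y ^ 2 + (2 - a * y) ^ 2) := by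
  nlinarith [sq_nonneg (a * y - 1), sq_nonneg (a * (2 - a * y))]

lemma sq_add_sq_line_pos (a y : ℝ) : 0 < y ^ 2 + (2 - a * y) ^ 2 := by
  nlinarith [one_add_sq_le_mul_sq_add_sq_line a y, sq_nonneg y, sq_nonneg a]

lemma abs_sq_sub_sq_sub_mul_le (b y r : ℝ) :
    |y ^ 2 - r ^ 2 - b * y * r| ≤ (1 + |b| / 2) * (y ^ 2 + r ^ 2) := by
  have hyr : 2 * |y| * |r| ≤ y ^ 2 + r ^ 2 := by
    simpa only [sq_abs] using two_mul_le_add_sq |y| |r|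
  calc |y ^ 2 - r ^ 2 - b * y * r| ≤ |y ^ 2 - r ^ 2| + |b| * |y| * |r| := by
        simpa only [abs_mul] using abs_sub (y ^ 2 - r ^ 2) (b * y * r)
    _ ≤ (1 + |b| / 2) * (y ^ 2 + r ^ 2) := by
        have hsq : |y ^ 2 - r ^ 2| ≤ y ^ 2 + r ^ 2 :=
          abs_le.2 ⟨by linarith [sq_nonneg y], by linarith [sq_nonneg r]⟩
        nlinarith [mul_le_mul_of_nonneg_left hyr (abs_nonneg b)]

lemma abs_hker_le (a y r : ℝ) : |hker a y r| ≤ (1 + |a⁻¹ - a| / 2) / (y ^ 2 + r ^ 2) := by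
  rcases (add_nonneg (sq_nonneg y) (sq_nonneg r)).eq_or_lt with h | h
  · simp [hker, ← h]
  · rw [hker, abs_div, abs_of_pos (pow_pos h 2), div_le_div_iff₀ (pow_pos h 2) h]
    nlinarith [abs_sq_sub_sq_sub_mul_le (a⁻¹ - a) y r]

lemma integrable_hker_line (a : ℝ) : Integrable fun y : ℝ => hker a y (2 - a * y) := by
  set K := (1 + |a⁻¹ - a| / 2) * (1 + a ^ 2)
  refine (integrable_inv_one_add_sq.const_mul K).mono' ?_ (.of_forall fun y => ?_)
  · have hmeas : Measurable fun y : ℝ => hker a y (2 - a * y) := by unfold hker; fun_prop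
    exact hmeas.aestronglyMeasurable
  · have hQ := sq_add_sq_line_pos a y
    calc ‖hker a y (2 - a * y)‖ ≤ (1 + |a⁻¹ - a| / 2) / (y ^ 2 + (2 - a * y) ^ 2) :=
          abs_hker_le a y _
      _ ≤ K * (1 + y ^ 2)⁻¹ := by
          rw [← div_eq_mul_inv, div_le_div_iff₀ hQ (by positivity), mul_assoc]
          gcongr
          exact one_add_sq_le_mul_sq_add_sq_line a y

noncomputable def hkerLinePrimitive (a z : ℝ) : ℝ :=
  (1 - 3 * a ^ 2 - 2 * a * (1 - a ^ 2) * z) / (z ^ 2 + (2 - a * z) ^ 2)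

lemma hasDerivAt_hkerLinePrimitive {a : ℝ} (ha : a ≠ 0) (y : ℝ) :
    HasDerivAt (hkerLinePrimitive a) (a * (1 + a ^ 2) * hker a y (2 - a * y)) y := by
  have hnum : HasDerivAt (fun z : ℝ => 1 - 3 * a ^ 2 - 2 * a * (1 - a ^ 2) * z)
      (-(2 * a * (1 - a ^ 2))) y := by
    simpa using ((hasDerivAt_id y).const_mul (2 * a * (1 - a ^ 2))).const_sub (1 - 3 * a ^ 2)
  have hden : HasDerivAt (fun z : ℝ => z ^ 2 + (2 - a * z) ^ 2)
      (2 * y + 2 * (2 - a * y) * (-a)) y := by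
    have hline : HasDerivAt (fun z : ℝ => 2 - a * z) (-a) y := by
      simpa using ((hasDerivAt_id y).const_mul a).const_sub 2
    exact ((hasDerivAt_pow 2 y).add (hline.pow 2)).congr_deriv (by ring)
  have hQ := (sq_add_sq_line_pos a y).ne'
  refine (hnum.div hden hQ).congr_deriv ?_
  rw [hker]
  field_simp
  ring

/-- Substituting `t = z⁻¹` turns the quotient into `t (p t - q) / (1 + (2 t - a)²)`,
which is continuous and vanishes at `t = 0`. -/
lemma tendsto_div_sq_add_sq_line {l : Filter ℝ} (hl : Tendsto (·⁻¹) l (𝓝 0))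
    (hl₀ : ∀ᶠ z in l, z ≠ 0) (p q a : ℝ) :
    Tendsto (fun z : ℝ => (p - q * z) / (z ^ 2 + (2 - a * z) ^ 2)) l (𝓝 0) := by
  set g : ℝ → ℝ := fun t => t * (p * t - q) / (1 + (2 * t - a) ^ 2)
  have hg : Continuous g :=
    Continuous.div (by fun_prop) (by fun_prop) fun t => by positivity
  have hg₀ : g 0 = 0 := by simp [g]
  refine (hg₀ ▸ (hg.tendsto 0).comp hl).congr' ?_
  filter_upwards [hl₀] with z hz
  have hQ := (sq_add_sq_line_pos a z).ne'
  simp only [Function.comp, g]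
  field_simp

lemma integral_hker_line_eq_zero {a : ℝ} (ha : a ≠ 0) :
    ∫ y : ℝ, hker a y (2 - a * y) = 0 := by
  have hF := integral_of_hasDerivAt_of_tendsto (hasDerivAt_hkerLinePrimitive ha)
    ((integrable_hker_line a).const_mul _)
    (tendsto_div_sq_add_sq_line tendsto_inv_atBot_zero (eventually_ne_atBot 0) _ _ a)
    (tendsto_div_sq_add_sq_line tendsto_inv_atTop_zero (eventually_ne_atTop 0) _ _ a)
  rw [integral_const_mul, sub_self] at hF
  exact (mul_eq_zero.1 hF).resolve_left (by positivity)

theorem hker_line_integral_zero_general (a : ℝ) (ha : 0 < a) :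
    Integrable (fun y : ℝ => hker a y (2 - a * y)) ∧
    (∫ y : ℝ, hker a y (2 - a * y)) = 0 ∧
    (∀ y : ℝ, HasDerivAt
      (fun z : ℝ => (1 - 3 * a ^ 2 - 2 * a * (1 - a ^ 2) * z) / (z ^ 2 + (2 - a * z) ^ 2))
      (a * (1 + a ^ 2) * hker a y (2 - a * y)) y) :=
  ⟨integrable_hker_line a, integral_hker_line_eq_zero ha.ne',
    hasDerivAt_hkerLinePrimitive ha.ne'⟩

/-- For `a ∈ (0,1)`, `y ↦ h_a(y, 2 − a·y)` is integrable on `ℝ` with integral `0`, and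
`a·(1+a²)·h_a(y, 2−a·y)` is the derivative of
`y ↦ (1 − 3a² − 2a(1−a²)y)/(y² + (2 − ay)²)`. -/
theorem hker_line_integral_zero (a : ℝ) (ha : 0 < a) (ha' : a < 1) :
    Integrable (fun y : ℝ => hker a y (2 - a * y)) ∧
    (∫ y : ℝ, hker a y (2 - a * y)) = 0 ∧
    (∀ y : ℝ, HasDerivAt
      (fun z : ℝ => (1 - 3 * a ^ 2 - 2 * a * (1 - a ^ 2) * z) / (z ^ 2 + (2 - a * z) ^ 2))
      (a * (1 + a ^ 2) * hker a y (2 - a * y)) y) :=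
  hker_line_integral_zero_general a ha
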